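/- arXiv:1302.6950 — 2 statements merged into one kernel-verified Lean document; each statement's English description precedes it below -/
import Mathlib

section
/- For square matrices T₁, T₂ and a positive integer N, ∑_{lcm(s,t)=N} S(s,T₁)·S(t,T₂) = S(N, T₁ ⊗ T₂), where S(m,T) := ∑_{g | m} μ(g) Tr(T^{m/g}) and the sum on the left ranges over all pairs of positive integers (s,t) with lcm(s,t) = N. -/
open scoped ArithmeticFunction ArithmeticFunction.Moebius Kronecker

/-- `S(m, T) = ∑_{g | m} μ(g) · Tr(T^{m/g})`. -/
def SW {α : Type*} [Fintype α] [DecidableEq α] (m : ℕ) (T : Matrix α α ℤ) : ℤ :=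
  ∑ g ∈ m.divisors, (μ g : ℤ) * (T ^ (m / g)).trace

lemma SW_antidiag {α : Type*} [Fintype α] [DecidableEq α] (m : ℕ) (T : Matrix α α ℤ) :
    ∑ x ∈ m.divisorsAntidiagonal, (μ x.1 : ℤ) * (T ^ x.2).trace = SW m T := by
  rw [Nat.sum_divisorsAntidiagonal (fun i j => (μ i : ℤ) * (T ^ j).trace)]
  rfl

lemma sum_SW {α : Type*} [Fintype α] [DecidableEq α] (T : Matrix α α ℤ) :
    ∀ n > 0, ∑ d ∈ n.divisors, SW d T = (T ^ n).trace := by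
  rw [ArithmeticFunction.sum_eq_iff_sum_mul_moebius_eq]
  exact fun n _ => SW_antidiag n T

lemma kron_pow {n₁ n₂ : ℕ} (T₁ : Matrix (Fin n₁) (Fin n₁) ℤ)
    (T₂ : Matrix (Fin n₂) (Fin n₂) ℤ) (k : ℕ) :
    (T₁ ⊗ₖ T₂) ^ k = (T₁ ^ k) ⊗ₖ (T₂ ^ k) := by
  induction k with
  | zero => simp [Matrix.one_kronecker_one]
  | succ k ih => rw [pow_succ, pow_succ, pow_succ, ih, Matrix.mul_kronecker_mul]

theorem stmt2 {n₁ n₂ : ℕ} (T₁ : Matrix (Fin n₁) (Fin n₁) ℤ)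
    (T₂ : Matrix (Fin n₂) (Fin n₂) ℤ) (N : ℕ) (hN : 0 < N) :
    ∑ p ∈ (N.divisors ×ˢ N.divisors).filter (fun p => Nat.lcm p.1 p.2 = N),
        SW p.1 T₁ * SW p.2 T₂ = SW N (T₁ ⊗ₖ T₂) := by
  set H : ℕ → ℤ := fun n => ∑ p ∈ (n.divisors ×ˢ n.divisors).filter
      (fun p => Nat.lcm p.1 p.2 = n), SW p.1 T₁ * SW p.2 T₂ with hH
  have key : ∀ n > 0, ∑ d ∈ n.divisors, H d = ((T₁ ⊗ₖ T₂) ^ n).trace := by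
    intro n hn
    have step1 : ∀ d ∈ n.divisors,
        H d = ∑ p ∈ (n.divisors ×ˢ n.divisors).filter (fun p => Nat.lcm p.1 p.2 = d),
          SW p.1 T₁ * SW p.2 T₂ := by
      intro d hd
      rw [Nat.mem_divisors] at hd
      apply Finset.sum_congr _ (fun _ _ => rfl)
      ext p
      simp only [Finset.mem_filter, Finset.mem_product, Nat.mem_divisors]
      constructor
      · rintro ⟨⟨⟨h1, _⟩, ⟨h2, _⟩⟩, h3⟩
        exact ⟨⟨⟨h1.trans hd.1, hn.ne'⟩, ⟨h2.trans hd.1, hn.ne'⟩⟩, h3⟩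
      · rintro ⟨⟨⟨h1, _⟩, ⟨h2, _⟩⟩, h3⟩
        have hp1 : p.1 ≠ 0 := fun h => hn.ne' (Nat.eq_zero_of_zero_dvd (h ▸ h1))
        have hp2 : p.2 ≠ 0 := fun h => hn.ne' (Nat.eq_zero_of_zero_dvd (h ▸ h2))
        have hd0 : d ≠ 0 := h3 ▸ Nat.lcm_ne_zero hp1 hp2
        exact ⟨⟨⟨h3 ▸ Nat.dvd_lcm_left _ _, hd0⟩, ⟨h3 ▸ Nat.dvd_lcm_right _ _, hd0⟩⟩, h3⟩
    have hmaps : ∀ p ∈ n.divisors ×ˢ n.divisors, Nat.lcm p.1 p.2 ∈ n.divisors := by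
      intro p hp
      simp only [Finset.mem_product, Nat.mem_divisors] at hp
      exact Nat.mem_divisors.mpr ⟨Nat.lcm_dvd hp.1.1 hp.2.1, hn.ne'⟩
    rw [Finset.sum_congr rfl step1,
      Finset.sum_fiberwise_of_maps_to hmaps (fun p => SW p.1 T₁ * SW p.2 T₂)]
    rw [Finset.sum_product, ← Finset.sum_mul_sum _ _ (fun x => SW x T₁) (fun y => SW y T₂), sum_SW T₁ n hn, sum_SW T₂ n hn,
      kron_pow, Matrix.trace_kronecker]
  have := (ArithmeticFunction.sum_eq_iff_sum_mul_moebius_eq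
    (f := H) (g := fun n => ((T₁ ⊗ₖ T₂) ^ n).trace)).mp key N hN
  show H N = SW N (T₁ ⊗ₖ T₂)
  rw [← this]
  exact SW_antidiag N (T₁ ⊗ₖ T₂)
end

section
/- With T_{G₁} as the 2R×2R matrix [[A,B],[B,A]] (A all-ones, B all-ones minus identity), det(1 − z·T_{G₁}) = (1 − z)·(1 − (2R−1)z)·(1 − z²)^{R−1} as polynomials in z. -/
open Polynomial Matrix

lemma blockdet {n α : Type*} [CommRing α] [Fintype n] [DecidableEq n] (M N : Matrix n n α) :
    (Matrix.fromBlocks M N N M).det = (M + N).det * (M - N).det := by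
  have h : Matrix.fromBlocks (1 : Matrix n n α) 1 0 1 * Matrix.fromBlocks M N N M *
      Matrix.fromBlocks 1 (-1) 0 1 = Matrix.fromBlocks (M + N) 0 N (M - N) := by
    simp [Matrix.fromBlocks_multiply]
    abel_nf
    trivial
  have := congrArg Matrix.det h
  simpa [Matrix.det_mul, Matrix.det_fromBlocks_zero₂₁, Matrix.det_fromBlocks_zero₁₂] using this

lemma detJ {K : Type*} [Field K] (R : ℕ) (hR : 1 ≤ R) (a b : K) (ha : a ≠ 0) :
    (a • (1 : Matrix (Fin R) (Fin R) K) + b • Matrix.of (fun _ _ => (1 : K))).det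
      = a ^ (R - 1) * (a + R * b) := by
  obtain ⟨r, rfl⟩ : ∃ r, R = r + 1 := ⟨R - 1, (Nat.succ_pred_eq_of_pos hR).symm⟩
  have h : a • (1 : Matrix (Fin (r+1)) (Fin (r+1)) K) + b • Matrix.of (fun _ _ => (1 : K))
      = a • (1 + Matrix.replicateCol Unit (fun _ : Fin (r+1) => b / a) *
          Matrix.replicateRow Unit (fun _ : Fin (r+1) => (1 : K))) := by
    ext i j
    by_cases hij : i = j <;>
      · simp [hij, Matrix.one_apply, Matrix.mul_apply, Matrix.smul_apply]
        field_simp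
  rw [h, Matrix.det_smul, Matrix.det_one_add_replicateCol_mul_replicateRow]
  simp [dotProduct, Finset.sum_div]
  field_simp
  ring

theorem stmt13 (R : ℕ) (hR : 2 ≤ R)
    (A B : Matrix (Fin R) (Fin R) ℤ)
    (hA : A = Matrix.of fun _ _ => 1) (hB : B = A - 1) :
    (1 - (Polynomial.X : ℤ[X]) • (Matrix.fromBlocks A B B A).map Polynomial.C).det
      = (1 - Polynomial.X) * (1 - (2 * (R : ℤ[X]) - 1) * Polynomial.X) *
        (1 - Polynomial.X ^ 2) ^ (R - 1) := by
  subst hA hB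
  set A : Matrix (Fin R) (Fin R) ℤ := Matrix.of fun _ _ => 1 with hA
  rw [Matrix.fromBlocks_map]
  have h1 : (1 : Matrix (Fin R ⊕ Fin R) (Fin R ⊕ Fin R) ℤ[X]) -
        (X : ℤ[X]) • Matrix.fromBlocks (A.map C) ((A - 1).map C) ((A - 1).map C) (A.map C)
      = Matrix.fromBlocks (1 - (X : ℤ[X]) • A.map C) (-((X : ℤ[X]) • (A - 1).map C))
          (-((X : ℤ[X]) • (A - 1).map C)) (1 - (X : ℤ[X]) • A.map C) := by
    ext (i | i) (j | j) <;>
      simp [Matrix.one_apply, Matrix.smul_apply, Matrix.map_apply, sub_eq_add_neg]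
  rw [h1, blockdet]
  -- second factor
  have hsub : (1 - (X : ℤ[X]) • A.map C) - -((X : ℤ[X]) • (A - 1).map C)
      = (1 - X : ℤ[X]) • (1 : Matrix (Fin R) (Fin R) ℤ[X]) := by
    ext i j
    by_cases hij : i = j <;>
      simp [hij, Matrix.one_apply, Matrix.smul_apply, Matrix.map_apply, hA]
  have hdet2 : ((1 - (X : ℤ[X]) • A.map C) - -((X : ℤ[X]) • (A - 1).map C)).det
      = (1 - X : ℤ[X]) ^ R := by
    rw [hsub, Matrix.det_smul, Matrix.det_one, mul_one, Fintype.card_fin]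
  -- first factor via fraction field
  set K := FractionRing (ℤ[X])
  set φ : ℤ[X] →+* K := algebraMap ℤ[X] K with hφ
  have hinj : Function.Injective φ := IsFractionRing.injective ℤ[X] K
  set M₁ : Matrix (Fin R) (Fin R) ℤ[X] :=
    (1 - (X : ℤ[X]) • A.map C) + -((X : ℤ[X]) • (A - 1).map C) with hM₁
  have hmap : M₁.map φ = φ (1 + X) • (1 : Matrix (Fin R) (Fin R) K) +
      φ (-(2 * X)) • Matrix.of (fun _ _ => (1 : K)) := by
    ext i j
    by_cases hij : i = j <;>
      · simp [hM₁, hij, Matrix.one_apply, Matrix.smul_apply, Matrix.map_apply, hA,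
          ← map_add, ← _root_.map_mul, ← map_neg, ← map_sub]
        ring_nf
  have hX : φ (1 + X) ≠ 0 := by
    intro h
    have : (1 + X : ℤ[X]) = 0 := hinj (by simpa using h)
    have := congrArg (fun p => Polynomial.coeff p 0) this
    simp at this
  have hRpos : 1 ≤ R := le_trans (by norm_num) hR
  have hdet1 : M₁.det = (1 + X : ℤ[X]) ^ (R - 1) * (1 + X - 2 * (R : ℤ[X]) * X) := by
    apply hinj
    rw [φ.map_det, RingHom.mapMatrix_apply, hmap, detJ R hRpos _ _ hX]
    simp only [_root_.map_mul, map_pow, map_sub, map_add, map_neg, _root_.map_one, map_natCast,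
      map_ofNat]
    ring
  rw [hdet1, hdet2]
  obtain ⟨r, rfl⟩ : ∃ r, R = r + 1 := ⟨R - 1, (Nat.succ_pred_eq_of_pos hRpos).symm⟩
  have hfac : (1 - X ^ 2 : ℤ[X]) = (1 - X) * (1 + X) := by ring
  rw [hfac, mul_pow]
  simp only [Nat.add_sub_cancel]
  push_cast
  ring
end
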